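/- arXiv:1607.01245 — 3 statements merged into one kernel-verified Lean document; each statement's English description precedes it below -/
import Mathlib

section
/- Let N ≥ 1 be an integer and let M > 1, b > 0, ℓ > 1, K > 0 and w > 0 satisfy 2N(M−1)/b ≤ w ≤ ( 1 + (b²/4) (ℓ − 1 + ℓ/K)² )^{−1/2}. Define u(t,x) = b^{1/(1−M)} (ℓ − 1/(1+wt))^{1/(1−M)} (1 − |x|²/(1+wt)²)^{1/(M−1)} on the open set Q = { (t,x) ∈ (0, 1/(wK)) × ℝ^N : |x| < 1 + wt }. Then at every point (t,x) ∈ Q the classical derivatives exist and the pointwise differential inequality ∂_t u(t,x) ≤ div_x ( u ∇_x(u^{M−1}) / √(1 + |∇_x(u^{M−1})|²) )(t,x) holds. -/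
open RealInnerProductSpace

noncomputable section

/-- Classical divergence of a vector field on `ℝ^N`: the sum of the partial
derivatives of the components. -/
def divergence {N : ℕ} (V : EuclideanSpace ℝ (Fin N) → EuclideanSpace ℝ (Fin N))
    (x : EuclideanSpace ℝ (Fin N)) : ℝ :=
  ∑ i, ⟪fderiv ℝ V x (EuclideanSpace.single i 1), EuclideanSpace.single i 1⟫

/-- The flux `u ∇(u^{M−1}) / √(1 + |∇(u^{M−1})|²)` of the speed-limited porous medium
equation, as a spatial vector field at time `t`. -/
def fluxSL {N : ℕ} (M : ℝ) (u : ℝ → EuclideanSpace ℝ (Fin N) → ℝ) (t : ℝ)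
    (x : EuclideanSpace ℝ (Fin N)) : EuclideanSpace ℝ (Fin N) :=
  (u t x / Real.sqrt (1 + ‖gradient (fun y => u t y ^ (M-1)) x‖ ^ 2)) •
    gradient (fun y => u t y ^ (M-1)) x

/-- The spherical-cap subsolution of STATEMENT 6:
`u(t,x) = b^{1/(1−M)} (ℓ − 1/(1+wt))^{1/(1−M)} (1 − |x|²/(1+wt)²)^{1/(M−1)}`. -/
def uSL6 {N : ℕ} (M b ℓ w : ℝ) (t : ℝ) (x : EuclideanSpace ℝ (Fin N)) : ℝ :=
  b ^ (1/(1-M)) * (ℓ - 1/(1+w*t)) ^ (1/(1-M)) *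
    (1 - ‖x‖ ^ 2 / (1+w*t) ^ 2) ^ (1/(M-1))

/-!
On the ball `|x| < R`, `R = 1 + w t`, the function is the cap `u = (c (R² - |x|²))^{1/(M-1)}` with
`c = 1 / (b (ℓ - 1/R) R²)`. Hence `u^{M-1}` is a paraboloid with gradient `-2 c x`, the flux is the
radial field `ψ(|x|²) x` with `ψ(σ) = -2 c u / √(1 + 4 c² σ)`, and its divergence is
`N ψ + 2 ψ' |x|²`. Dividing by `u`, the time derivative is
`w/(M-1) · (2|x|² / (R (R² - |x|²)) - b c)`. The lower bound on `w` lets `-w b c/(M-1)` absorb the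
`-2 c N/√(1 + 4 c² |x|²)` part of the divergence; the upper bound on `w`, together with
`R < 1 + 1/K`, gives `w √(1 + 4 c² |x|²) ≤ 2 c R`, which absorbs the positive part of the time
derivative into the `ψ'` term. The remaining part of `ψ'` is nonnegative.
-/

open Metric Topology Set

section Ball

variable {E : Type*} [SeminormedAddCommGroup E] {R : ℝ} {y : E}

theorem sq_norm_lt_sq_of_mem_ball (hy : y ∈ ball 0 R) : ‖y‖ ^ 2 < R ^ 2 := by
  rw [mem_ball_zero_iff] at hy
  exact pow_lt_pow_left₀ hy (norm_nonneg y) two_ne_zero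

theorem one_sub_sq_norm_div_sq_pos (hR₀ : 0 < R) (hy : y ∈ ball 0 R) : 0 < 1 - ‖y‖ ^ 2 / R ^ 2 := by
  rw [sub_pos, div_lt_one (by positivity)]
  exact sq_norm_lt_sq_of_mem_ball hy

end Ball

section RadialFields

variable {F : Type*} [NormedAddCommGroup F] [InnerProductSpace ℝ F]

theorem hasFDerivAt_smul_self_of_norm_sq {ψ : ℝ → ℝ} {ψ' : ℝ} {x : F}
    (hψ : HasDerivAt ψ ψ' (‖x‖ ^ 2)) :
    HasFDerivAt (fun y : F => ψ (‖y‖ ^ 2) • y)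
      (ψ (‖x‖ ^ 2) • ContinuousLinearMap.id ℝ F + (ψ' • (2 • innerSL ℝ x)).smulRight x) x :=
  (hψ.comp_hasFDerivAt x (hasStrictFDerivAt_norm_sq x).hasFDerivAt).smul (hasFDerivAt_id x)

theorem hasGradientAt_const_sub_mul_norm_sq [CompleteSpace F] (a c : ℝ) (x : F) :
    HasGradientAt (fun y : F => a - c * ‖y‖ ^ 2) (-(2 * c) • x) x := by
  rw [hasGradientAt_iff_hasFDerivAt]
  refine (((hasStrictFDerivAt_norm_sq x).hasFDerivAt.const_mul c).const_sub a).congr_fderiv ?_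
  ext y
  simp only [neg_apply, smul_apply, coe_innerSL_apply, nsmul_eq_mul, Nat.cast_ofNat, smul_eq_mul,
    neg_smul, map_neg, map_smul, InnerProductSpace.toDual_apply_apply, neg_inj]
  ring

end RadialFields

theorem divergence_smul_self_of_norm_sq {N : ℕ} {ψ : ℝ → ℝ} {ψ' : ℝ}
    {x : EuclideanSpace ℝ (Fin N)} (hψ : HasDerivAt ψ ψ' (‖x‖ ^ 2))
    {V : EuclideanSpace ℝ (Fin N) → EuclideanSpace ℝ (Fin N)}
    (hV : V =ᶠ[𝓝 x] fun y => ψ (‖y‖ ^ 2) • y) :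
    divergence V x = N * ψ (‖x‖ ^ 2) + 2 * ψ' * ‖x‖ ^ 2 := by
  rw [divergence, hV.fderiv_eq, (hasFDerivAt_smul_self_of_norm_sq hψ).fderiv,
    EuclideanSpace.real_norm_sq_eq]
  simp only [add_apply, smul_apply, ContinuousLinearMap.id_apply,
    ContinuousLinearMap.smulRight_apply, coe_innerSL_apply, EuclideanSpace.inner_single_right,
    Real.ringHom_apply, one_mul, nsmul_eq_mul, Nat.cast_ofNat, smul_eq_mul, inner_add_left,
    PiLp.smul_apply, PiLp.single_eq_same, mul_one, Finset.sum_add_distrib, Finset.sum_const,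
    Finset.card_univ, Fintype.card_fin, Finset.mul_sum, add_right_inj]
  ring_nf

section Cap

variable {F : Type*} [NormedAddCommGroup F] {N : ℕ} {M c R : ℝ}

def capProfile (c R p : ℝ) (y : F) : ℝ := (c * (R ^ 2 - ‖y‖ ^ 2)) ^ p

def capFluxCoeff (c R p σ : ℝ) : ℝ := -2 * c * ((c * (R ^ 2 - σ)) ^ p / √(1 + 4 * c ^ 2 * σ))

theorem capProfile_rpow_sub_one (hM : M ≠ 1) (hc : 0 ≤ c) {y : F} (hy : y ∈ ball 0 R) :
    capProfile c R (1 / (M - 1)) y ^ (M - 1) = c * R ^ 2 - c * ‖y‖ ^ 2 := by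
  have hbase : 0 ≤ c * (R ^ 2 - ‖y‖ ^ 2) :=
    mul_nonneg hc (sub_nonneg.2 (sq_norm_lt_sq_of_mem_ball hy).le)
  rw [capProfile, ← Real.rpow_mul hbase, one_div_mul_cancel (sub_ne_zero.2 hM), Real.rpow_one,
    mul_sub]

theorem hasGradientAt_rpow_of_eqOn_capProfile [InnerProductSpace ℝ F] [CompleteSpace F]
    {u : F → ℝ} (hM : M ≠ 1) (hc : 0 ≤ c) (hu : EqOn u (capProfile c R (1 / (M - 1))) (ball 0 R))
    {y : F} (hy : y ∈ ball 0 R) :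
    HasGradientAt (fun z => u z ^ (M - 1)) (-(2 * c) • y) y := by
  refine (hasGradientAt_const_sub_mul_norm_sq (c * R ^ 2) c y).congr_of_eventuallyEq ?_
  filter_upwards [isOpen_ball.mem_nhds hy] with z hz
  rw [hu hz, capProfile_rpow_sub_one hM hc hz]

theorem fluxSL_eqOn_capFluxCoeff {u : ℝ → EuclideanSpace ℝ (Fin N) → ℝ} {t : ℝ} (hM : M ≠ 1)
    (hc : 0 ≤ c) (hu : EqOn (u t) (capProfile c R (1 / (M - 1))) (ball 0 R)) :
    EqOn (fluxSL M u t) (fun y => capFluxCoeff c R (1 / (M - 1)) (‖y‖ ^ 2) • y) (ball 0 R) := by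
  intro y hy
  rw [fluxSL, (hasGradientAt_rpow_of_eqOn_capProfile hM hc hu hy).gradient, hu hy, norm_smul,
    smul_smul, Real.norm_eq_abs, abs_neg, abs_of_nonneg (by positivity)]
  simp only [capFluxCoeff, capProfile]
  ring_nf

theorem hasDerivAt_capFluxCoeff (p : ℝ) (hc : 0 < c) {σ : ℝ} (hσ₀ : 0 ≤ σ) (hσ : σ < R ^ 2) :
    HasDerivAt (capFluxCoeff c R p)
      ((c * (R ^ 2 - σ)) ^ p * (2 * c * p / ((R ^ 2 - σ) * √(1 + 4 * c ^ 2 * σ))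
        + 4 * c ^ 3 / √(1 + 4 * c ^ 2 * σ) ^ 3)) σ := by
  have hbase : 0 < c * (R ^ 2 - σ) := mul_pos hc (sub_pos.2 hσ)
  have harg : 0 < 1 + 4 * c ^ 2 * σ := by positivity
  have hS : 0 < √(1 + 4 * c ^ 2 * σ) := Real.sqrt_pos.2 harg
  have hnum : HasDerivAt (fun τ => (c * (R ^ 2 - τ)) ^ p)
      (-c * p * (c * (R ^ 2 - σ)) ^ (p - 1)) σ := by
    simpa using (((hasDerivAt_id' σ).const_sub (R ^ 2)).const_mul c).rpow_const
      (p := p) (Or.inl hbase.ne')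
  have hden : HasDerivAt (fun τ => √(1 + 4 * c ^ 2 * τ))
      (4 * c ^ 2 / (2 * √(1 + 4 * c ^ 2 * σ))) σ := by
    simpa using (((hasDerivAt_id' σ).const_mul (4 * c ^ 2)).const_add 1).sqrt harg.ne'
  refine ((hnum.div hden hS.ne').const_mul (-2 * c)).congr_deriv ?_
  rw [Real.rpow_sub_one hbase.ne']
  field_simp
  ring

end Cap

theorem HasDerivAt.const_mul_rpow_mul_rpow {f g : ℝ → ℝ} {f' g' t : ℝ} (a q r : ℝ)
    (hf : HasDerivAt f f' t) (hg : HasDerivAt g g' t) (hf₀ : 0 < f t) (hg₀ : 0 < g t) :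
    HasDerivAt (fun s => a * f s ^ q * g s ^ r)
      (a * f t ^ q * g t ^ r * (q * f' / f t + r * g' / g t)) t := by
  refine (((hf.rpow_const (Or.inl hf₀.ne')).const_mul a).mul
    (hg.rpow_const (Or.inl hg₀.ne'))).congr_deriv ?_
  rw [Real.rpow_sub_one hf₀.ne', Real.rpow_sub_one hg₀.ne']
  field_simp

section SpeedLimitedCap

variable {N : ℕ} {M b ℓ w t R : ℝ}

def capCoeff (b ℓ R : ℝ) : ℝ := 1 / (b * (ℓ - 1 / R) * R ^ 2)

theorem capCoeff_pos (hb : 0 < b) (hR₀ : 0 < R) (hα : 0 < ℓ - 1 / R) : 0 < capCoeff b ℓ R := by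
  rw [capCoeff]
  positivity

theorem mul_capCoeff (hb : b ≠ 0) : b * capCoeff b ℓ R = 1 / ((ℓ - 1 / R) * R ^ 2) := by
  rw [capCoeff]
  field_simp

-- `1 / (2 c R) = b (ℓ R - 1) / 2`, and `ℓ R - 1 < ℓ - 1 + ℓ / K` as long as `R K < K + 1`.
theorem one_le_four_mul_capCoeff_sq {K : ℝ} (hb : b ≠ 0) (hK : 0 < K) (hR₁ : 1 < R)
    (hRK : R * K < K + 1) (hα : 0 < ℓ - 1 / R) :
    1 ≤ 4 * capCoeff b ℓ R ^ 2 * R ^ 2 * (b ^ 2 / 4 * (ℓ - 1 + ℓ / K) ^ 2) := by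
  have hαR : (ℓ - 1 / R) * R ≤ ℓ - 1 + ℓ / K := by
    have hℓ : 0 < ℓ := by linarith [one_div_pos.2 (zero_lt_one.trans hR₁)]
    have : ℓ * R - ℓ ≤ ℓ / K := by rw [le_div_iff₀ hK]; nlinarith
    rw [sub_mul, one_div_mul_cancel (by linarith)]
    linarith
  have hsq : 4 * capCoeff b ℓ R ^ 2 * R ^ 2 * (b ^ 2 / 4 * (ℓ - 1 + ℓ / K) ^ 2)
      = ((ℓ - 1 + ℓ / K) / ((ℓ - 1 / R) * R)) ^ 2 := by
    rw [capCoeff]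
    field_simp
  rw [hsq]
  exact one_le_pow₀ ((one_le_div (by positivity)).2 hαR)

theorem uSL6_eqOn_capProfile (hb : 0 < b) (hR : 1 + w * t = R) (hR₀ : 0 < R)
    (hα : 0 < ℓ - 1 / R) :
    EqOn (uSL6 M b ℓ w t)
      (capProfile (capCoeff b ℓ R) R (1 / (M - 1)) : EuclideanSpace ℝ (Fin N) → ℝ)
      (ball 0 R) := by
  intro y hy
  have hG := one_sub_sq_norm_div_sq_pos hR₀ hy
  have hbase : capCoeff b ℓ R * (R ^ 2 - ‖y‖ ^ 2)
      = b⁻¹ * (ℓ - 1 / R)⁻¹ * (1 - ‖y‖ ^ 2 / R ^ 2) := by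
    rw [capCoeff]
    field_simp
  rw [uSL6, capProfile, hR, hbase, Real.mul_rpow (by positivity) hG.le,
    Real.mul_rpow (by positivity) (by positivity), Real.inv_rpow hb.le, Real.inv_rpow hα.le,
    ← neg_sub M 1, div_neg, Real.rpow_neg hb.le, Real.rpow_neg hα.le]

theorem hasDerivAt_uSL6_time {x : EuclideanSpace ℝ (Fin N)} (hR : 1 + w * t = R)
    (hR₀ : 0 < R) (hα : 0 < ℓ - 1 / R) (hx : x ∈ ball 0 R) :
    HasDerivAt (fun s => uSL6 M b ℓ w s x)
      (uSL6 M b ℓ w t x * (1 / (M - 1) * w *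
        (2 * ‖x‖ ^ 2 / (R * (R ^ 2 - ‖x‖ ^ 2)) - 1 / ((ℓ - 1 / R) * R ^ 2)))) t := by
  have hG := one_sub_sq_norm_div_sq_pos hR₀ hx
  have hradius : HasDerivAt (fun s => 1 + w * s) w t := by
    simpa using ((hasDerivAt_id' t).const_mul w).const_add 1
  subst hR
  have hα' := ((hasDerivAt_const t 1).div hradius hR₀.ne').const_sub ℓ
  have hG' := ((hasDerivAt_const t (‖x‖ ^ 2)).div (hradius.pow 2)
    (pow_ne_zero 2 hR₀.ne')).const_sub 1
  simp only [Pi.div_apply, Pi.pow_apply] at hα' hG'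
  refine (HasDerivAt.const_mul_rpow_mul_rpow _ _ _ hα' hG' hα hG).congr_deriv
    (congrArg (uSL6 M b ℓ w t x * ·) ?_)
  rw [← neg_sub M 1, div_neg]
  generalize 1 / (M - 1) = r
  field_simp
  ring

end SpeedLimitedCap

theorem mul_sqrt_one_add_le {w B c R s : ℝ} (hw : 0 ≤ w) (hwB : w ≤ (1 + B) ^ (-(1 : ℝ) / 2))
    (hB : 1 ≤ 4 * c ^ 2 * R ^ 2 * B) (hs₀ : 0 ≤ s) (hs : s ≤ R ^ 2) (hc : 0 < c) (hR : 0 < R) :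
    w * √(1 + 4 * c ^ 2 * s) ≤ 2 * c * R := by
  have hB₀ : 0 < 1 + B := by nlinarith [sq_nonneg (c * R)]
  have hw_sq : w ^ 2 * (1 + B) ≤ 1 := by
    have hsq : ((1 + B) ^ (-(1 : ℝ) / 2)) ^ 2 = (1 + B)⁻¹ := by
      rw [← Real.rpow_natCast, ← Real.rpow_mul hB₀.le]
      norm_num [Real.rpow_neg_one]
    rw [← le_div_iff₀ hB₀, one_div, ← hsq]
    exact pow_le_pow_left₀ hw hwB 2
  rw [← pow_le_pow_iff_left₀ (by positivity) (by positivity) two_ne_zero, mul_pow,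
    Real.sq_sqrt (by positivity)]
  nlinarith [mul_le_mul_of_nonneg_left hs (sq_nonneg (2 * c * w)), sq_nonneg (c * R)]

theorem cap_time_deriv_le_flux_div {N p w b c R s S u : ℝ} (hN₀ : 0 ≤ N) (hN : 2 * N ≤ p * w * b)
    (hwS : w * S ≤ 2 * c * R) (hS : 1 ≤ S) (hs : 0 ≤ s) (hsR : s < R ^ 2) (hu : 0 ≤ u)
    (hc : 0 < c) (hp : 0 ≤ p) (hR : 0 < R) :
    u * (p * w * (2 * s / (R * (R ^ 2 - s)) - b * c)) ≤
      N * (-2 * c * (u / S)) +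
        2 * (u * (2 * c * p / ((R ^ 2 - s) * S) + 4 * c ^ 3 / S ^ 3)) * s := by
  have hS₀ : 0 < S := one_pos.trans_le hS
  have hgap : 0 < R ^ 2 - s := sub_pos.2 hsR
  have hdiffusion : 2 * c * N / S ≤ p * w * b * c :=
    (div_le_self (by positivity) hS).trans (by nlinarith)
  have hdrift : p * w * (2 * s / (R * (R ^ 2 - s))) ≤ 2 * c * p * 2 * s / ((R ^ 2 - s) * S) := by
    rw [mul_div_assoc', div_le_div_iff₀ (by positivity) (by positivity)]
    nlinarith [mul_le_mul_of_nonneg_left hwS (by positivity : 0 ≤ 2 * p * s * (R ^ 2 - s))]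
  have hcurv : 0 ≤ 8 * c ^ 3 * s / S ^ 3 := by positivity
  have key : p * w * (2 * s / (R * (R ^ 2 - s)) - b * c) ≤
      -(2 * c * N / S) + 2 * c * p * 2 * s / ((R ^ 2 - s) * S) + 8 * c ^ 3 * s / S ^ 3 := by
    linarith
  calc u * (p * w * (2 * s / (R * (R ^ 2 - s)) - b * c))
      ≤ u * (-(2 * c * N / S) + 2 * c * p * 2 * s / ((R ^ 2 - s) * S) + 8 * c ^ 3 * s / S ^ 3) :=
        mul_le_mul_of_nonneg_left key hu
    _ = _ := by ring

/-- under the parameter constraint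
`2N(M−1)/b ≤ w ≤ (1 + (b²/4)(ℓ−1+ℓ/K)²)^{-1/2}`, the function
`u(t,x) = b^{1/(1−M)} (ℓ − 1/(1+wt))^{1/(1−M)} (1 − |x|²/(1+wt)²)^{1/(M−1)}` has
classical derivatives at every point of `Q = {(t,x) : 0 < t < 1/(wK), |x| < 1+wt}` and
satisfies there the pointwise inequality
`∂_t u ≤ div_x ( u ∇_x(u^{M−1}) / √(1 + |∇_x(u^{M−1})|²) )`. -/
theorem stmt_6 (N : ℕ) (hN : 1 ≤ N) (M b ℓ K w : ℝ)
    (hM : 1 < M) (hb : 0 < b) (hℓ : 1 < ℓ) (hK : 0 < K)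
    (hw1 : 2 * N * (M - 1) / b ≤ w)
    (hw2 : w ≤ (1 + b ^ 2 / 4 * (ℓ - 1 + ℓ / K) ^ 2) ^ (-(1:ℝ)/2)) :
    ∀ (t : ℝ) (x : EuclideanSpace ℝ (Fin N)),
      0 < t → t < 1 / (w * K) → ‖x‖ < 1 + w * t →
      (DifferentiableAt ℝ (fun s : ℝ => uSL6 M b ℓ w s x) t ∧
        DifferentiableAt ℝ (fun y => uSL6 M b ℓ w t y ^ (M-1)) x ∧
        DifferentiableAt ℝ (fluxSL M (uSL6 M b ℓ w) t) x) ∧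
      deriv (fun s : ℝ => uSL6 M b ℓ w s x) t ≤
        divergence (fluxSL M (uSL6 M b ℓ w) t) x := by
  intro t x ht htK hx
  have hN₁ : (1 : ℝ) ≤ N := by exact_mod_cast hN
  have hM₁ : 0 < M - 1 := sub_pos.2 hM
  have hw : 0 < w := lt_of_lt_of_le (by positivity) hw1
  obtain ⟨R, hR⟩ : ∃ R, 1 + w * t = R := ⟨_, rfl⟩
  have hR₁ : 1 < R := by nlinarith
  have hRK : R * K < K + 1 := by nlinarith [(lt_div_iff₀ (mul_pos hw hK)).1 htK]
  have hα : 0 < ℓ - 1 / R := by linarith [(div_lt_one (by linarith)).2 hR₁]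
  have hxR : x ∈ ball 0 R := mem_ball_zero_iff.2 (hR ▸ hx)
  have hs := sq_norm_lt_sq_of_mem_ball hxR
  have hu := uSL6_eqOn_capProfile (M := M) (N := N) hb hR (by linarith) hα
  have hut := hasDerivAt_uSL6_time (M := M) (b := b) hR (by linarith) hα hxR
  set c := capCoeff b ℓ R
  have hc : 0 < c := capCoeff_pos hb (by linarith) hα
  have hψ := hasDerivAt_capFluxCoeff (1 / (M - 1)) hc (sq_nonneg ‖x‖) hs
  have hV := (fluxSL_eqOn_capFluxCoeff hM.ne' hc.le hu).eventuallyEq_of_mem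
    (isOpen_ball.mem_nhds hxR)
  refine ⟨⟨hut.differentiableAt,
    (hasGradientAt_rpow_of_eqOn_capProfile hM.ne' hc.le hu hxR).differentiableAt,
    ((hasFDerivAt_smul_self_of_norm_sq hψ).congr_of_eventuallyEq hV).differentiableAt⟩, ?_⟩
  have hN' : 2 * (N : ℝ) ≤ 1 / (M - 1) * w * b := by
    rw [div_mul_eq_mul_div, div_mul_eq_mul_div, le_div_iff₀ hM₁]
    linarith [(div_le_iff₀ hb).1 hw1]
  have hspeed : w * √(1 + 4 * c ^ 2 * ‖x‖ ^ 2) ≤ 2 * c * R :=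
    mul_sqrt_one_add_le hw.le hw2 (one_le_four_mul_capCoeff_sq hb.ne' hK hR₁ hRK hα)
      (sq_nonneg _) hs.le hc (by linarith)
  rw [hut.deriv, divergence_smul_self_of_norm_sq hψ hV, hu hxR, ← mul_capCoeff hb.ne']
  exact cap_time_deriv_le_flux_div N.cast_nonneg hN' hspeed
    (Real.one_le_sqrt.2 (le_add_of_nonneg_right (by positivity))) (sq_nonneg _) hs
    (Real.rpow_nonneg (mul_nonneg hc.le (sub_nonneg.2 hs.le)) _) hc (by positivity) (by linarith)
end
end

section
/- Let N ≥ 1 be an integer, m > 1 and r > 0. For 0 < y < ρ define η = √(ρ² − y²), D = √( η² (1+η)² + y² ), E = (1+η)² + η(1+η) − 1, F(ρ,y) = − ( N (1+η)^m / D + y² (1+η)^m E / D³ − m y² (1+η)^{m−1} / (η D) ), and G(ρ,y) = ( ρ/η − F(ρ,y) ) / (1+η). Then lim_{(ρ,y) → (r,r), 0 < y < ρ} G(ρ,y) · √(ρ² − y²) = r (1 − m); in particular this limit is negative. -/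
noncomputable section

/-- `η = √(ρ² − y²)`. -/
def ηv (ρ y : ℝ) : ℝ := Real.sqrt (ρ ^ 2 - y ^ 2)

/-- `D = √(η²(1+η)² + y²)`. -/
def Dv (ρ y : ℝ) : ℝ := Real.sqrt ((ηv ρ y) ^ 2 * (1 + ηv ρ y) ^ 2 + y ^ 2)

/-- `E = (1+η)² + η(1+η) − 1`. -/
def Ev (ρ y : ℝ) : ℝ := (1 + ηv ρ y) ^ 2 + ηv ρ y * (1 + ηv ρ y) - 1

/-- `F(ρ,y) = −( N(1+η)^m/D + y²(1+η)^m E/D³ − m y²(1+η)^{m−1}/(ηD) )`. -/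
def Fv (N : ℕ) (m ρ y : ℝ) : ℝ :=
  -(N * (1 + ηv ρ y) ^ m / Dv ρ y + y ^ 2 * (1 + ηv ρ y) ^ m * Ev ρ y / (Dv ρ y) ^ 3
    - m * y ^ 2 * (1 + ηv ρ y) ^ (m - 1) / (ηv ρ y * Dv ρ y))

/-- `G(ρ,y) = (ρ/η − F(ρ,y))/(1+η)`. -/
def Gv (N : ℕ) (m ρ y : ℝ) : ℝ := (ρ / ηv ρ y - Fv N m ρ y) / (1 + ηv ρ y)

/-! On `{0 < y < ρ}`, multiplying by `η` clears the `1/η` singularities of `G`. The resulting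
expression `Hv` is continuous at `(r,r)`, since `D(r,r) = r ≠ 0` and `1 + η ≥ 1`, and there
`η = E = 0` and `D = r`, so its value is `r − m r`. -/

def Hv (N : ℕ) (m ρ y : ℝ) : ℝ :=
  (ρ + N * ηv ρ y * (1 + ηv ρ y) ^ m / Dv ρ y
      + ηv ρ y * y ^ 2 * (1 + ηv ρ y) ^ m * Ev ρ y / Dv ρ y ^ 3
      - m * y ^ 2 * (1 + ηv ρ y) ^ (m - 1) / Dv ρ y) / (1 + ηv ρ y)

lemma ηv_nonneg (ρ y : ℝ) : 0 ≤ ηv ρ y := Real.sqrt_nonneg _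

lemma ηv_pos {ρ y : ℝ} (hy : 0 ≤ y) (hyρ : y < ρ) : 0 < ηv ρ y :=
  Real.sqrt_pos.mpr (by nlinarith)

lemma Dv_pos {ρ y : ℝ} (hy : y ≠ 0) : 0 < Dv ρ y :=
  Real.sqrt_pos.mpr (by positivity)

@[simp] lemma ηv_self (r : ℝ) : ηv r r = 0 := by simp [ηv]

lemma Dv_self {r : ℝ} (hr : 0 ≤ r) : Dv r r = r := by simp [Dv, Real.sqrt_sq hr]

@[simp] lemma Ev_self (r : ℝ) : Ev r r = 0 := by simp [Ev]

lemma Hv_self (N : ℕ) (m : ℝ) {r : ℝ} (hr : 0 < r) : Hv N m r r = r * (1 - m) := by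
  simp [Hv, Dv_self hr.le]
  field_simp

lemma Gv_mul_ηv (N : ℕ) (m : ℝ) {ρ y : ℝ} (hy : 0 < y) (hyρ : y < ρ) :
    Gv N m ρ y * ηv ρ y = Hv N m ρ y := by
  have hη := ηv_pos hy.le hyρ
  have hD := Dv_pos (ρ := ρ) hy.ne'
  have h1η : 0 < 1 + ηv ρ y := by linarith
  simp only [Gv, Fv, Hv]
  field_simp
  ring

lemma continuous_ηv : Continuous fun p : ℝ × ℝ => ηv p.1 p.2 := by
  unfold ηv; fun_prop

lemma continuous_Dv : Continuous fun p : ℝ × ℝ => Dv p.1 p.2 := by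
  unfold Dv; have := continuous_ηv; fun_prop

lemma continuous_Ev : Continuous fun p : ℝ × ℝ => Ev p.1 p.2 := by
  unfold Ev; have := continuous_ηv; fun_prop

lemma continuous_one_add_ηv_rpow (s : ℝ) :
    Continuous fun p : ℝ × ℝ => (1 + ηv p.1 p.2) ^ s :=
  (continuous_const.add continuous_ηv).rpow_const fun p =>
    Or.inl (by simp only [Pi.add_apply]; linarith [ηv_nonneg p.1 p.2])

lemma continuousAt_Hv (N : ℕ) (m : ℝ) {r : ℝ} (hr : 0 < r) :
    ContinuousAt (fun p : ℝ × ℝ => Hv N m p.1 p.2) (r, r) := by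
  have hD : Dv r r ≠ 0 := by rw [Dv_self hr.le]; exact hr.ne'
  have := continuous_ηv
  have := continuous_Dv
  have := continuous_Ev
  have := continuous_one_add_ηv_rpow m
  have := continuous_one_add_ηv_rpow (m - 1)
  unfold Hv
  refine ContinuousAt.div ?_ (by fun_prop) (by simp)
  fun_prop (disch := simp [hD])

theorem stmt_16_general (N : ℕ) (m r : ℝ) (hm : 1 < m) (hr : 0 < r) :
    Filter.Tendsto (fun p : ℝ × ℝ => Gv N m p.1 p.2 * Real.sqrt (p.1 ^ 2 - p.2 ^ 2))
      (nhdsWithin (r, r) {p : ℝ × ℝ | 0 < p.2 ∧ p.2 < p.1})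
      (nhds (r * (1 - m))) ∧
    r * (1 - m) < 0 := by
  refine ⟨?_, by nlinarith⟩
  have hH := (continuousAt_Hv N m hr).tendsto.mono_left
    (nhdsWithin_le_nhds (s := {p : ℝ × ℝ | 0 < p.2 ∧ p.2 < p.1}))
  rw [Hv_self N m hr] at hH
  refine hH.congr' ?_
  filter_upwards [self_mem_nhdsWithin] with p ⟨hy, hyρ⟩
  exact (Gv_mul_ηv N m hy hyρ).symm

/-- `G(ρ,y)·√(ρ² − y²) → r(1−m)` as `(ρ,y) → (r,r)` within
`{0 < y < ρ}`; in particular the limit is negative. -/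
theorem stmt_16 (N : ℕ) (hN : 1 ≤ N) (m r : ℝ) (hm : 1 < m) (hr : 0 < r) :
    Filter.Tendsto (fun p : ℝ × ℝ => Gv N m p.1 p.2 * Real.sqrt (p.1 ^ 2 - p.2 ^ 2))
      (nhdsWithin (r, r) {p : ℝ × ℝ | 0 < p.2 ∧ p.2 < p.1})
      (nhds (r * (1 - m))) ∧
    r * (1 - m) < 0 :=
  stmt_16_general N m r hm hr

end
end

section
/- Let N ≥ 1 be an integer, m > 1, T > 0 and r₁ > 0. For 0 ≤ y < ρ define η = √(ρ² − y²), D = √( η² (1+η)² + y² ), E = (1+η)² + η(1+η) − 1, F(ρ,y) = − ( N (1+η)^m / D + y² (1+η)^m E / D³ − m y² (1+η)^{m−1} / (η D) ), and G(ρ,y) = ( ρ/η − F(ρ,y) ) / (1+η). Then G is bounded above on the set H = { (ρ,y) : r₁/2 ≤ ρ ≤ r₁ + log(1+T)/(m−1), 0 ≤ y < ρ }; that is, there exists γ₀ ∈ ℝ such that G(ρ,y) ≤ γ₀ for all (ρ,y) ∈ H. -/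
set_option maxHeartbeats 1000000


noncomputable section

/-- `G` is bounded above on
`H = {(ρ,y) : r₁/2 ≤ ρ ≤ r₁ + log(1+T)/(m−1), 0 ≤ y < ρ}`. -/
theorem stmt_17 (N : ℕ) (hN : 1 ≤ N) (m T r₁ : ℝ) (hm : 1 < m) (hT : 0 < T)
    (hr₁ : 0 < r₁) :
    ∃ γ₀ : ℝ, ∀ ρ y : ℝ,
      r₁ / 2 ≤ ρ → ρ ≤ r₁ + Real.log (1 + T) / (m - 1) → 0 ≤ y → y < ρ →
      Gv N m ρ y ≤ γ₀ := by
  obtain ⟨R, hRdef⟩ : ∃ R : ℝ, R = r₁ + Real.log (1 + T) / (m - 1) := ⟨_, rfl⟩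
  have hRr : r₁ ≤ R := by
    have h1 : 0 ≤ Real.log (1 + T) := Real.log_nonneg (by linarith)
    have h2 : 0 ≤ Real.log (1 + T) / (m - 1) := div_nonneg h1 (by linarith)
    linarith [hRdef ▸ le_refl R]
  have hR0 : 0 < R := lt_of_lt_of_le hr₁ hRr
  obtain ⟨Pmax, hPdef⟩ : ∃ P : ℝ, P = (1 + R) ^ m := ⟨_, rfl⟩
  have hPmax0 : (0:ℝ) < Pmax := hPdef ▸ Real.rpow_pos_of_pos (by linarith) m
  obtain ⟨E₁, hE₁def⟩ : ∃ E : ℝ, E = (1 + R) ^ 2 + R * (1 + R) := ⟨_, rfl⟩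
  have hE₁0 : 0 ≤ E₁ := by rw [hE₁def]; positivity
  refine ⟨((N:ℝ) * Pmax + Pmax * E₁ + R * (1 + R) ^ 2) / (r₁ / 2), ?_⟩
  intro ρ y h1 h2 hy hyρ
  rw [← hRdef] at h2
  have hρ : 0 < ρ := lt_of_le_of_lt hy hyρ
  have hsub : 0 < ρ ^ 2 - y ^ 2 := by nlinarith
  have hη0 : 0 < ηv ρ y := Real.sqrt_pos.mpr hsub
  have hη2 : (ηv ρ y) ^ 2 = ρ ^ 2 - y ^ 2 := Real.sq_sqrt hsub.le
  have hηρ : ηv ρ y ≤ ρ := by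
    have : ηv ρ y ≤ Real.sqrt (ρ ^ 2) := Real.sqrt_le_sqrt (by nlinarith)
    rwa [Real.sqrt_sq hρ.le] at this
  have hD2 : (Dv ρ y) ^ 2 = (ηv ρ y) ^ 2 * (1 + ηv ρ y) ^ 2 + y ^ 2 :=
    Real.sq_sqrt (by positivity)
  have hDnn : 0 ≤ Dv ρ y := Real.sqrt_nonneg _
  have hEdef : Ev ρ y = (1 + ηv ρ y) ^ 2 + ηv ρ y * (1 + ηv ρ y) - 1 := rfl
  -- make everything opaque
  simp only [Gv, Fv]
  generalize hEg : Ev ρ y = E at *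
  generalize hηg : ηv ρ y = η at *
  generalize hDg : Dv ρ y = D at *
  clear hEg hηg hDg
  have hDρ : ρ ≤ D := by nlinarith [sq_nonneg (D - ρ), sq_nonneg (D + ρ)]
  have hD0 : 0 < D := lt_of_lt_of_le hρ hDρ
  have hr2D : r₁ / 2 ≤ D := le_trans h1 hDρ
  have hηR : η ≤ R := le_trans hηρ h2
  have hm0 : (0:ℝ) ≤ m := by linarith
  have hPle : (1 + η) ^ m ≤ Pmax := by
    rw [hPdef]; exact Real.rpow_le_rpow (by linarith) (by linarith) hm0
  have hPpos : (0:ℝ) < (1 + η) ^ m := Real.rpow_pos_of_pos (by linarith) m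
  have hP' : (1:ℝ) ≤ (1 + η) ^ (m - 1) :=
    Real.one_le_rpow (by linarith) (by linarith)
  have hE : E ≤ E₁ := by rw [hEdef, hE₁def]; nlinarith
  have hE0 : 0 ≤ E := by rw [hEdef]; nlinarith
  have hr2 : (0:ℝ) < r₁ / 2 := by linarith
  -- term bounds
  have tA : (N:ℝ) * (1 + η) ^ m / D ≤ (N:ℝ) * Pmax / (r₁ / 2) := by
    have hN1 : (1:ℝ) ≤ (N:ℝ) := by exact_mod_cast hN
    apply div_le_div₀ (by positivity) (by nlinarith) hr2 hr2D
  have tB : y ^ 2 * (1 + η) ^ m * E / D ^ 3 ≤ Pmax * E₁ / (r₁ / 2) := by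
    have hyD : y ^ 2 ≤ D ^ 2 := by nlinarith
    have step1 : y ^ 2 * (1 + η) ^ m * E / D ^ 3 ≤ Pmax * E₁ / D := by
      rw [div_le_div_iff₀ (by positivity) hD0]
      have key : y ^ 2 * ((1 + η) ^ m * E) ≤ D ^ 2 * (Pmax * E₁) := by
        have h1 : (1 + η) ^ m * E ≤ Pmax * E₁ := mul_le_mul hPle hE hE0 hPmax0.le
        have h2 : 0 ≤ Pmax * E₁ := by positivity
        nlinarith
      calc y ^ 2 * (1 + η) ^ m * E * D = y ^ 2 * ((1 + η) ^ m * E) * D := by ring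
        _ ≤ D ^ 2 * (Pmax * E₁) * D := by nlinarith
        _ = Pmax * E₁ * D ^ 3 := by ring
    exact le_trans step1 (div_le_div_of_nonneg_left (by positivity) hr2 hr2D)
  have tC : ρ / η - m * y ^ 2 * (1 + η) ^ (m - 1) / (η * D) ≤ R * (1 + R) ^ 2 / (r₁ / 2) := by
    have hmP : (1:ℝ) ≤ m * (1 + η) ^ (m - 1) := by nlinarith
    have hηD : (0:ℝ) < η * D := by positivity
    have step1 : ρ / η - m * y ^ 2 * (1 + η) ^ (m - 1) / (η * D)
        ≤ (ρ * D - y ^ 2) / (η * D) := by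
      have hC : y ^ 2 / (η * D) ≤ m * y ^ 2 * (1 + η) ^ (m - 1) / (η * D) :=
        (div_le_div_iff_of_pos_right hηD).mpr (by nlinarith)
      have hEq : ρ / η - y ^ 2 / (η * D) = (ρ * D - y ^ 2) / (η * D) := by
        field_simp
      linarith [hEq ▸ sub_le_sub_left hC (ρ / η)]
    have step2 : (ρ * D - y ^ 2) / (η * D) ≤ η * (1 + η) ^ 2 / D := by
      rw [div_le_div_iff₀ hηD hD0]
      have h3 : ρ * D ≤ D * D := mul_le_mul_of_nonneg_right hDρ hDnn
      have h4 : (ρ * D - y ^ 2) * D ≤ (D * D - y ^ 2) * D :=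
        mul_le_mul_of_nonneg_right (by linarith) hDnn
      have h5 : (D * D - y ^ 2) * D = η * (1 + η) ^ 2 * (η * D) := by
        rw [show D * D = D ^ 2 by ring, hD2]; ring
      linarith [h5 ▸ h4]
    have step3 : η * (1 + η) ^ 2 / D ≤ R * (1 + R) ^ 2 / (r₁ / 2) := by
      have hsq : (1 + η) ^ 2 ≤ (1 + R) ^ 2 :=
        pow_le_pow_left₀ (by linarith) (by linarith) 2
      exact div_le_div₀ (by positivity) (mul_le_mul hηR hsq (by positivity) hR0.le) hr2 hr2D
    linarith
  -- assemble
  have hnum : ρ / η - -((N:ℝ) * (1 + η) ^ m / D + y ^ 2 * (1 + η) ^ m * E / D ^ 3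
      - m * y ^ 2 * (1 + η) ^ (m - 1) / (η * D))
      ≤ ((N:ℝ) * Pmax + Pmax * E₁ + R * (1 + R) ^ 2) / (r₁ / 2) := by
    have : ((N:ℝ) * Pmax + Pmax * E₁ + R * (1 + R) ^ 2) / (r₁ / 2)
        = (N:ℝ) * Pmax / (r₁ / 2) + Pmax * E₁ / (r₁ / 2) + R * (1 + R) ^ 2 / (r₁ / 2) := by
      ring
    rw [this]; linarith
  have hγ0 : 0 ≤ ((N:ℝ) * Pmax + Pmax * E₁ + R * (1 + R) ^ 2) / (r₁ / 2) := by positivity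
  rw [div_le_iff₀ (by linarith : (0:ℝ) < 1 + η)]
  have hmul : ((N:ℝ) * Pmax + Pmax * E₁ + R * (1 + R) ^ 2) / (r₁ / 2)
      ≤ ((N:ℝ) * Pmax + Pmax * E₁ + R * (1 + R) ^ 2) / (r₁ / 2) * (1 + η) := by
    nlinarith [mul_nonneg hγ0 hη0.le]
  linarith


end
end
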